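/- arXiv:2111.15324 — 2 statements merged into one kernel-verified Lean document; each statement's English description precedes it below -/
import Mathlib

section
/- Let f : [a,b] → ℝ be a nondecreasing continuous function, p ≥ 1, and (fₙ) a sequence of nondecreasing functions on [a,b] with ‖fₙ - f‖_p → 0. If fₙ(a) ≥ f(a) for all n, then fₙ(a) → f(a). -/
/-!
If `fₙ(a) ≥ f(a) + ε`, monotonicity pushes `fₙ ≥ f(a) + ε` to all of `[a, b]`, while continuity
keeps `f < f(a) + ε/2` on some `[a, c]`. Hence `|fₙ - f| ≥ ε/2` on `[a, c]`, which bounds the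
`p`-th power of the `Lᵖ` distance below by `(ε/2)ᵖ (c - a) > 0`, uniformly in `n`; so this can
happen only finitely often, and `fₙ(a) ≥ f(a)` gives the other side.
-/

open MeasureTheory Filter Set Topology

theorem tendsto_zero_of_tendsto_rpow_one_div {ι : Type*} {l : Filter ι} {u : ι → ℝ} {p : ℝ}
    (hp : 0 < p) (hu : ∀ i, 0 ≤ u i) (h : Tendsto (fun i => u i ^ (1 / p)) l (𝓝 0)) :
    Tendsto u l (𝓝 0) := by
  have hpow : Tendsto (fun i => (u i ^ (1 / p)) ^ p) l (𝓝 0) := by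
    simpa [Real.zero_rpow hp.ne'] using h.rpow_const (p := p) (Or.inr hp.le)
  refine hpow.congr fun i => ?_
  rw [← Real.rpow_mul (hu i), one_div, inv_mul_cancel₀ hp.ne', Real.rpow_one]

theorem intervalIntegral.mul_sub_le_integral_of_le_on {h : ℝ → ℝ} {a b c m : ℝ}
    (hac : a ≤ c) (hcb : c ≤ b) (hint : IntervalIntegrable h volume a b)
    (h_nonneg : ∀ x ∈ Ioc a b, 0 ≤ h x) (hm : ∀ x ∈ Icc a c, m ≤ h x) :
    m * (c - a) ≤ ∫ x in a..b, h x :=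
  calc m * (c - a)
      = ∫ _ in a..c, m := by rw [intervalIntegral.integral_const, smul_eq_mul, mul_comm]
    _ ≤ ∫ x in a..c, h x :=
      intervalIntegral.integral_mono_on hac intervalIntegrable_const
        (hint.mono_set (uIcc_subset_uIcc_left (mem_uIcc_of_le hac hcb))) hm
    _ ≤ ∫ x in a..b, h x :=
      intervalIntegral.integral_mono_interval le_rfl hac hcb
        ((ae_restrict_iff' measurableSet_Ioc).2 (ae_of_all _ h_nonneg)) hint

theorem exists_pos_le_integral_rpow_abs_sub_of_lt_left {a b p y : ℝ} {f : ℝ → ℝ} (hab : a < b)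
    (hp : 0 < p) (hf : ContinuousWithinAt f (Icc a b) a) (hy : f a < y) :
    ∃ m > 0, ∀ g : ℝ → ℝ, MonotoneOn g (Icc a b) →
      IntervalIntegrable (fun x => |g x - f x| ^ p) volume a b → y ≤ g a →
      m ≤ ∫ x in a..b, |g x - f x| ^ p := by
  set ε := y - f a
  have hε : 0 < ε := sub_pos.2 hy
  have hnear : ∀ᶠ x in 𝓝[≥] a, f x < f a + ε / 2 := by
    rw [← nhdsWithin_Icc_eq_nhdsGE hab]
    exact hf.eventually (gt_mem_nhds (by linarith))
  obtain ⟨u, hau, hu⟩ := mem_nhdsGE_iff_exists_Icc_subset.1 hnear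
  set c := min b u
  have hac : a < c := lt_min hab hau
  have hcb : c ≤ b := min_le_left b u
  refine ⟨(ε / 2) ^ p * (c - a), by positivity, fun g hg hint hga => ?_⟩
  refine intervalIntegral.mul_sub_le_integral_of_le_on hac.le hcb hint
    (fun x _ => by positivity) fun x hx => ?_
  have hxab : x ∈ Icc a b := ⟨hx.1, hx.2.trans hcb⟩
  have hgx : g a ≤ g x := hg (left_mem_Icc.2 hab.le) hxab hx.1
  have hfx : f x < f a + ε / 2 := hu ⟨hx.1, hx.2.trans (min_le_right b u)⟩
  have hgap : ε / 2 ≤ |g x - f x| := le_abs.2 (Or.inl (by linarith))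
  exact Real.rpow_le_rpow (by positivity) hgap hp.le

theorem stmt3_general (a b : ℝ) (hab : a < b) (p : ℝ) (hp : 1 ≤ p)
    (f : ℝ → ℝ) (hf_cont : ContinuousOn f (Set.Icc a b))
    (F : ℕ → ℝ → ℝ) (hF_mono : ∀ n, MonotoneOn (F n) (Set.Icc a b))
    (hF_int : ∀ n, IntervalIntegrable (fun x => |F n x - f x| ^ p) volume a b)
    (hLp : Tendsto (fun n => (∫ x in a..b, |F n x - f x| ^ p) ^ (1 / p)) atTop (nhds 0))
    (hge : ∀ n, f a ≤ F n a) :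
    Tendsto (fun n => F n a) atTop (nhds (f a)) := by
  have hp0 : 0 < p := zero_lt_one.trans_le hp
  have hI : Tendsto (fun n => ∫ x in a..b, |F n x - f x| ^ p) atTop (𝓝 0) :=
    tendsto_zero_of_tendsto_rpow_one_div hp0
      (fun n => intervalIntegral.integral_nonneg hab.le fun x _ => by positivity) hLp
  refine tendsto_order.2 ⟨fun y hy => Eventually.of_forall fun n => hy.trans_le (hge n),
    fun y hy => ?_⟩
  obtain ⟨m, hm, hle⟩ := exists_pos_le_integral_rpow_abs_sub_of_lt_left hab hp0
    (hf_cont a (left_mem_Icc.2 hab.le)) hy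
  filter_upwards [hI.eventually (gt_mem_nhds hm)] with n hn
  by_contra! hy_le
  exact hn.not_ge (hle (F n) (hF_mono n) (hF_int n) hy_le)

/-- If nondecreasing `fₙ` converge to a continuous nondecreasing `f` in the `Lᵖ` norm on `[a,b]`
and `fₙ(a) ≥ f(a)` for all `n`, then `fₙ(a) → f(a)`. -/
theorem stmt3 (a b : ℝ) (hab : a < b) (p : ℝ) (hp : 1 ≤ p)
    (f : ℝ → ℝ) (hf_cont : ContinuousOn f (Set.Icc a b))
    (hf_mono : MonotoneOn f (Set.Icc a b))
    (F : ℕ → ℝ → ℝ) (hF_mono : ∀ n, MonotoneOn (F n) (Set.Icc a b))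
    (hF_int : ∀ n, IntervalIntegrable (fun x => |F n x - f x| ^ p) volume a b)
    (hLp : Tendsto (fun n => (∫ x in a..b, |F n x - f x| ^ p) ^ (1 / p)) atTop (nhds 0))
    (hge : ∀ n, f a ≤ F n a) :
    Tendsto (fun n => F n a) atTop (nhds (f a)) :=
  stmt3_general a b hab p hp f hf_cont F hF_mono hF_int hLp hge
end

section
/- Let f : [a,b] → ℝ be continuous and nondecreasing, and (Δₙ) a sequence of partitions of [a,b] with ‖Δₙ‖ → 0. For integers l ≥ 0 and m ≥ 2l+1 and real p ∈ [1,∞), let SIₙ denote the best L^p approximation of f in the cone of nondecreasing Δₙ-piecewise polynomials of degree ≤ m belonging to C^l[a,b]. Then ‖f - SIₙ‖_p → 0 as n → ∞. -/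
/-!
Interpolate `f` at the knots of `Δₙ` by gluing, on each cell, a rescaled copy of a nondecreasing
`C^l` step `φ` that vanishes on `(-∞, 0]`, equals `1` on `[1, ∞)` and is a polynomial of degree
`2l + 1` on `[0, 1]` (the normalized primitive of `(t(1-t))^l`, or the clamp when `l = 0`).
The interpolant belongs to the cone and, on every cell, lies between the values of `f` at its
ends, so it is uniformly within `ω_f(‖Δₙ‖)` of `f`. Hence the `Lᵖ` error of the best
approximation is at most `(b - a)^(1/p) ω_f(‖Δₙ‖) → 0`.
-/

open MeasureTheory Filter

/-- The cone of nondecreasing `Δ`-piecewise polynomials of degree `≤ m` of class `C^l` on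
`[a,b]`, for the partition `α 0 < α 1 < ... < α k`. -/
def SIcone (a b : ℝ) (α : ℕ → ℝ) (k m l : ℕ) : Set (ℝ → ℝ) :=
  {g | MonotoneOn g (Set.Icc a b) ∧ ContDiffOn ℝ (l : ℕ∞) g (Set.Icc a b) ∧
    ∀ i < k, ∃ q : Polynomial ℝ, q.natDegree ≤ m ∧
      ∀ x ∈ Set.Icc (α i) (α (i + 1)), g x = q.eval x}

open Set Polynomial

namespace Polynomial

variable {K : Type*} [Field K] [CharZero K]

theorem exists_derivative_eq (q : K[X]) :
    ∃ A : K[X], derivative A = q ∧ A.natDegree ≤ q.natDegree + 1 := by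
  refine ⟨q.sum fun n a => C (a / (n + 1)) * X ^ (n + 1), ?_, ?_⟩
  · rw [Polynomial.sum_def, map_sum]
    conv_rhs => rw [q.as_sum_support_C_mul_X_pow]
    refine Finset.sum_congr rfl fun n _ => ?_
    rw [derivative_C_mul_X_pow]
    congr 1
    push_cast
    field_simp
  · rw [Polynomial.sum_def]
    refine natDegree_sum_le_of_forall_le _ _ fun n hn => ?_
    exact (natDegree_C_mul_X_pow_le _ _).trans (by simpa using le_natDegree_of_mem_supp n hn)

end Polynomial

theorem contDiff_natCast_succ_of_hasDerivAt {f f' : ℝ → ℝ} {n : ℕ}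
    (hf : ∀ x, HasDerivAt f (f' x) x) (hf' : ContDiff ℝ (n : ℕ∞) f') :
    ContDiff ℝ ((n + 1 : ℕ) : ℕ∞) f := by
  have hderiv : deriv f = f' := funext fun x => (hf x).deriv
  rw [show (((n + 1 : ℕ) : ℕ∞) : WithTop ℕ∞) = (n : ℕ∞) + 1 by push_cast; rfl,
    contDiff_succ_iff_deriv, hderiv]
  exact ⟨fun x => (hf x).differentiableAt, by simp, hf'⟩

theorem hasDerivAt_max_zero_pow (n : ℕ) (x : ℝ) :
    HasDerivAt (fun x : ℝ => max x 0 ^ (n + 2)) ((n + 2) * max x 0 ^ (n + 1)) x := by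
  have off_zero : ∀ y : ℝ, y ≠ 0 →
      HasDerivAt (fun x : ℝ => max x 0 ^ (n + 2)) ((n + 2) * max y 0 ^ (n + 1)) y := by
    intro y hy
    rcases hy.lt_or_gt with hy | hy
    · have h : (fun x : ℝ => max x 0 ^ (n + 2)) =ᶠ[nhds y] fun _ => 0 := by
        filter_upwards [Iio_mem_nhds hy] with z hz
        simp [max_eq_right hz.out.le]
      simpa [max_eq_right hy.le] using (hasDerivAt_const y (0 : ℝ)).congr_of_eventuallyEq h
    · have h : (fun x : ℝ => max x 0 ^ (n + 2)) =ᶠ[nhds y] fun x => x ^ (n + 2) := by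
        filter_upwards [Ioi_mem_nhds hy] with z hz
        simp [max_eq_left hz.out.le]
      simpa [max_eq_left hy.le] using (hasDerivAt_pow (n + 2) y).congr_of_eventuallyEq h
  exact hasDerivAt_of_hasDerivAt_of_ne' off_zero (by fun_prop) (by fun_prop) x

theorem contDiff_max_zero_pow (n : ℕ) :
    ContDiff ℝ (n : ℕ∞) fun x : ℝ => max x 0 ^ (n + 1) := by
  induction n with
  | zero => simpa using (continuous_id.max continuous_const : Continuous fun x : ℝ => max x 0)
  | succ n ih =>
    exact contDiff_natCast_succ_of_hasDerivAt (hasDerivAt_max_zero_pow n)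
      (contDiff_const.mul ih)

/- Since `stepDensity j` vanishes to order `j + 1` at `0` and `1`, its primitive glues the
polynomial on `[0, 1]` to the constants `0` and `1` in class `C^(j+1)`. -/
noncomputable def stepDensity (j : ℕ) (s : ℝ) : ℝ := max (s * (1 - s)) 0 ^ (j + 1)

noncomputable def smoothStep (j : ℕ) (t : ℝ) : ℝ :=
  (∫ s in 0..t, stepDensity j s) / ∫ s in 0..1, stepDensity j s

section SmoothStep

variable (j : ℕ)

theorem continuous_stepDensity : Continuous (stepDensity j) := by
  unfold stepDensity; fun_prop

theorem contDiff_stepDensity : ContDiff ℝ (j : ℕ∞) (stepDensity j) :=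
  (contDiff_max_zero_pow j).comp (by fun_prop)

theorem stepDensity_nonneg (s : ℝ) : 0 ≤ stepDensity j s := by
  unfold stepDensity; positivity

theorem stepDensity_eq_zero {s : ℝ} (hs : s ∉ Ioo 0 1) : stepDensity j s = 0 := by
  have : s * (1 - s) ≤ 0 := by
    rw [mem_Ioo, not_and_or, not_lt, not_lt] at hs
    rcases hs with hs | hs <;> nlinarith
  simp [stepDensity, max_eq_right this]

theorem stepDensity_eq_eval {s : ℝ} (hs : s ∈ Icc 0 1) :
    stepDensity j s = ((X * (1 - X)) ^ (j + 1) : ℝ[X]).eval s := by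
  have : 0 ≤ s * (1 - s) := mul_nonneg hs.1 (by linarith [hs.2])
  simp [stepDensity, max_eq_left this]

theorem integral_stepDensity_pos : 0 < ∫ s in 0..1, stepDensity j s :=
  intervalIntegral.intervalIntegral_pos_of_pos_on
    ((continuous_stepDensity j).intervalIntegrable 0 1)
    (fun s hs => by
      have : 0 < s * (1 - s) := mul_pos hs.1 (by linarith [hs.2])
      simp only [stepDensity, max_eq_left this.le]
      positivity)
    one_pos

theorem hasDerivAt_smoothStep (t : ℝ) :
    HasDerivAt (smoothStep j) (stepDensity j t / ∫ s in 0..1, stepDensity j s) t :=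
  ((continuous_stepDensity j).integral_hasStrictDerivAt 0 t).hasDerivAt.div_const _

theorem contDiff_smoothStep : ContDiff ℝ ((j + 1 : ℕ) : ℕ∞) (smoothStep j) :=
  contDiff_natCast_succ_of_hasDerivAt (hasDerivAt_smoothStep j)
    ((contDiff_stepDensity j).div_const _)

theorem monotone_smoothStep : Monotone (smoothStep j) :=
  monotone_of_deriv_nonneg (fun t => (hasDerivAt_smoothStep j t).differentiableAt)
    fun t => (hasDerivAt_smoothStep j t).deriv ▸
      div_nonneg (stepDensity_nonneg j t) (integral_stepDensity_pos j).le

theorem smoothStep_of_nonpos {t : ℝ} (ht : t ≤ 0) : smoothStep j t = 0 := by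
  have : ∫ s in 0..t, stepDensity j s = 0 := by
    refine intervalIntegral.integral_zero_ae (Eventually.of_forall fun s hs => ?_)
    refine stepDensity_eq_zero j fun h => ?_
    rw [uIoc_of_ge ht] at hs
    linarith [hs.2, h.1]
  rw [smoothStep, this, zero_div]

theorem smoothStep_of_one_le {t : ℝ} (ht : 1 ≤ t) : smoothStep j t = 1 := by
  have htail : ∫ s in 1..t, stepDensity j s = 0 := by
    refine intervalIntegral.integral_zero_ae (Eventually.of_forall fun s hs => ?_)
    refine stepDensity_eq_zero j fun h => ?_
    rw [uIoc_of_le ht] at hs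
    linarith [hs.1, h.2]
  have hint := (continuous_stepDensity j).intervalIntegrable (μ := volume)
  rw [smoothStep, ← intervalIntegral.integral_add_adjacent_intervals (hint 0 1) (hint 1 t),
    htail, add_zero, div_self (integral_stepDensity_pos j).ne']

theorem exists_polynomial_eq_smoothStep :
    ∃ q : ℝ[X], q.natDegree ≤ 2 * (j + 1) + 1 ∧
      ∀ t ∈ Icc (0 : ℝ) 1, smoothStep j t = q.eval t := by
  obtain ⟨A, hA, hAdeg⟩ := exists_derivative_eq ((X * (1 - X)) ^ (j + 1) : ℝ[X])
  set Z := ∫ s in 0..1, stepDensity j s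
  refine ⟨C Z⁻¹ * (A - C (A.eval 0)), ?_, fun t ht => ?_⟩
  · have : ((X * (1 - X)) ^ (j + 1) : ℝ[X]).natDegree ≤ 2 * (j + 1) := by
      compute_degree; omega
    refine (natDegree_C_mul_le _ _).trans ((natDegree_sub_C).le.trans ?_)
    omega
  · have hFTC : ∫ s in 0..t, stepDensity j s = A.eval t - A.eval 0 := by
      rw [← intervalIntegral.integral_eq_sub_of_hasDerivAt (fun s _ => A.hasDerivAt s)
        (A.derivative.continuous.intervalIntegrable 0 t)]
      refine intervalIntegral.integral_congr fun s hs => ?_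
      rw [uIcc_of_le ht.1] at hs
      rw [hA, stepDensity_eq_eval j ⟨hs.1, hs.2.trans ht.2⟩]
    simp [smoothStep, hFTC, Z, div_eq_inv_mul]

end SmoothStep

structure IsPolynomialStep (l : ℕ) (φ : ℝ → ℝ) : Prop where
  monotone : Monotone φ
  contDiff : ContDiff ℝ (l : ℕ∞) φ
  eq_zero_of_nonpos : ∀ t ≤ 0, φ t = 0
  eq_one_of_one_le : ∀ t, 1 ≤ t → φ t = 1
  exists_polynomial :
    ∃ q : ℝ[X], q.natDegree ≤ 2 * l + 1 ∧ ∀ t ∈ Icc (0 : ℝ) 1, φ t = q.eval t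

theorem isPolynomialStep_clamp : IsPolynomialStep 0 fun t => max (min t 1) 0 where
  monotone _ _ h := max_le_max (min_le_min_right _ h) le_rfl
  contDiff := by simpa using (by fun_prop : Continuous fun t : ℝ => max (min t 1) 0)
  eq_zero_of_nonpos t ht := by simp [ht, ht.trans zero_le_one]
  eq_one_of_one_le t ht := by simp [ht]
  exists_polynomial := ⟨X, by simp, fun t ht => by simp [ht.1, ht.2]⟩

theorem isPolynomialStep_smoothStep (j : ℕ) : IsPolynomialStep (j + 1) (smoothStep j) where
  monotone := monotone_smoothStep j
  contDiff := contDiff_smoothStep j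
  eq_zero_of_nonpos _ := smoothStep_of_nonpos j
  eq_one_of_one_le _ := smoothStep_of_one_le j
  exists_polynomial := exists_polynomial_eq_smoothStep j

theorem exists_isPolynomialStep (l : ℕ) : ∃ φ, IsPolynomialStep l φ := by
  cases l with
  | zero => exact ⟨_, isPolynomialStep_clamp⟩
  | succ j => exact ⟨_, isPolynomialStep_smoothStep j⟩

theorem mem_Icc_of_lt_succ {β : Type*} [Preorder β] {α : ℕ → β} {k : ℕ}
    (hα : ∀ i < k, α i < α (i + 1)) {i : ℕ} (hi : i ≤ k) : α i ∈ Icc (α 0) (α k) :=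
  have hmono := (strictMonoOn_Iic_of_lt_succ hα).monotoneOn
  ⟨hmono (mem_Iic.2 (Nat.zero_le k)) (mem_Iic.2 hi) (Nat.zero_le i),
    hmono (mem_Iic.2 hi) (mem_Iic.2 le_rfl) hi⟩

theorem exists_lt_mem_Icc_of_mem_Icc {β : Type*} [LinearOrder β] {α : ℕ → β} {k : ℕ}
    (hk : 0 < k) {x : β} (hx : x ∈ Icc (α 0) (α k)) : ∃ i < k, x ∈ Icc (α i) (α (i + 1)) := by
  induction k with
  | zero => omega
  | succ k ih =>
    rcases Nat.eq_zero_or_pos k with rfl | hk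
    · exact ⟨0, Nat.zero_lt_one, hx⟩
    rcases le_or_gt x (α k) with hxk | hxk
    · obtain ⟨i, hi, hxi⟩ := ih hk ⟨hx.1, hxk⟩
      exact ⟨i, by omega, hxi⟩
    · exact ⟨k, by omega, hxk.le, hx.2⟩

noncomputable def stepInterpolant (φ : ℝ → ℝ) (α y : ℕ → ℝ) (k : ℕ) (x : ℝ) : ℝ :=
  y 0 + ∑ i ∈ Finset.range k, (y (i + 1) - y i) * φ ((x - α i) / (α (i + 1) - α i))

section StepInterpolant

variable {φ : ℝ → ℝ} {α y : ℕ → ℝ} {k : ℕ}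

theorem stepInterpolant_eq_of_mem_Icc (h0 : ∀ t ≤ 0, φ t = 0) (h1 : ∀ t, 1 ≤ t → φ t = 1)
    (hα : ∀ i < k, α i < α (i + 1)) {i : ℕ} (hi : i < k) {x : ℝ}
    (hx : x ∈ Icc (α i) (α (i + 1))) :
    stepInterpolant φ α y k x = y i + (y (i + 1) - y i) * φ ((x - α i) / (α (i + 1) - α i)) := by
  have hmono := (strictMonoOn_Iic_of_lt_succ hα).monotoneOn
  have hbefore : ∀ j ∈ Finset.range i,
      (y (j + 1) - y j) * φ ((x - α j) / (α (j + 1) - α j)) = y (j + 1) - y j := by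
    intro j hj
    have hj := Finset.mem_range.1 hj
    have hle : α (j + 1) ≤ x :=
      (hmono (mem_Iic.2 (by omega)) (mem_Iic.2 hi.le) hj).trans hx.1
    rw [h1 _ ((one_le_div (sub_pos.2 (hα j (by omega)))).2 (by linarith)), mul_one]
  have hafter : ∀ j ∈ Finset.Ico (i + 1) k,
      (y (j + 1) - y j) * φ ((x - α j) / (α (j + 1) - α j)) = 0 := by
    intro j hj
    have hj := Finset.mem_Ico.1 hj
    have hle : x ≤ α j :=
      hx.2.trans (hmono (mem_Iic.2 hi) (mem_Iic.2 hj.2.le) hj.1)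
    rw [h0 _ (div_nonpos_of_nonpos_of_nonneg (by linarith) (sub_pos.2 (hα j hj.2)).le),
      mul_zero]
  rw [stepInterpolant, ← Finset.sum_range_add_sum_Ico _ hi, Finset.sum_range_succ,
    Finset.sum_congr rfl hbefore, Finset.sum_congr rfl hafter, Finset.sum_const_zero,
    Finset.sum_range_sub]
  ring

theorem monotone_stepInterpolant (hφ : Monotone φ) (hα : ∀ i < k, α i ≤ α (i + 1))
    (hy : ∀ i < k, y i ≤ y (i + 1)) : Monotone (stepInterpolant φ α y k) := by
  intro x x' hx
  refine add_le_add_right (Finset.sum_le_sum fun i hi => ?_) _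
  have hi := Finset.mem_range.1 hi
  refine mul_le_mul_of_nonneg_left (hφ ?_) (sub_nonneg.2 (hy i hi))
  gcongr
  exact sub_nonneg.2 (hα i hi)

theorem contDiff_stepInterpolant {n : ℕ∞} (hφ : ContDiff ℝ n φ) :
    ContDiff ℝ n (stepInterpolant φ α y k) :=
  contDiff_const.add <| ContDiff.sum fun _ _ =>
    contDiff_const.mul <| hφ.comp <| (contDiff_id.sub contDiff_const).div_const _

theorem stepInterpolant_mem_SIcone {l m : ℕ} (a b : ℝ) (hφ : IsPolynomialStep l φ)
    (hm : 2 * l + 1 ≤ m) (hα : ∀ i < k, α i < α (i + 1)) (hy : ∀ i < k, y i ≤ y (i + 1)) :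
    stepInterpolant φ α y k ∈ SIcone a b α k m l := by
  obtain ⟨q, hq, hφq⟩ := hφ.exists_polynomial
  refine ⟨(monotone_stepInterpolant hφ.monotone (fun i hi => (hα i hi).le) hy).monotoneOn _,
    (contDiff_stepInterpolant hφ.contDiff).contDiffOn, fun i hi => ?_⟩
  have hlen : 0 < α (i + 1) - α i := sub_pos.2 (hα i hi)
  refine ⟨C (y i) + C (y (i + 1) - y i) * q.comp (C (α (i + 1) - α i)⁻¹ * (X - C (α i))),
    ?_, fun x hx => ?_⟩
  · have : (q.comp (C (α (i + 1) - α i)⁻¹ * (X - C (α i)))).natDegree ≤ m := by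
      refine natDegree_comp_le.trans ?_
      have : (C (α (i + 1) - α i)⁻¹ * (X - C (α i))).natDegree ≤ 1 := by compute_degree
      nlinarith
    compute_degree
    exact this
  · have ht : (x - α i) / (α (i + 1) - α i) ∈ Icc (0 : ℝ) 1 :=
      ⟨div_nonneg (by linarith [hx.1]) hlen.le, (div_le_one hlen).2 (by linarith [hx.2])⟩
    rw [stepInterpolant_eq_of_mem_Icc hφ.eq_zero_of_nonpos hφ.eq_one_of_one_le hα hi hx,
      hφq _ ht]
    simp [div_eq_inv_mul]

theorem abs_sub_stepInterpolant_le {f : ℝ → ℝ} {a b ε : ℝ} (hf : MonotoneOn f (Icc a b))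
    (hφ : Monotone φ) (h0 : ∀ t ≤ 0, φ t = 0) (h1 : ∀ t, 1 ≤ t → φ t = 1) (hk : 0 < k)
    (hα0 : α 0 = a) (hαk : α k = b) (hα : ∀ i < k, α i < α (i + 1))
    (hjump : ∀ i < k, f (α (i + 1)) - f (α i) ≤ ε) {x : ℝ} (hx : x ∈ Icc a b) :
    |f x - stepInterpolant φ α (fun i => f (α i)) k x| ≤ ε := by
  obtain ⟨i, hi, hxi⟩ := exists_lt_mem_Icc_of_mem_Icc hk (hα0 ▸ hαk ▸ hx)
  have hmem : ∀ j ≤ k, α j ∈ Icc a b := fun j hj => hα0 ▸ hαk ▸ mem_Icc_of_lt_succ hα hj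
  have hf_left : f (α i) ≤ f x := hf (hmem i hi.le) hx hxi.1
  have hf_right : f x ≤ f (α (i + 1)) := hf hx (hmem (i + 1) hi) hxi.2
  set t := (x - α i) / (α (i + 1) - α i)
  have hφt : φ t ∈ Icc 0 1 := by
    have hlen : 0 < α (i + 1) - α i := sub_pos.2 (hα i hi)
    refine ⟨h0 0 le_rfl ▸ hφ (div_nonneg (by linarith [hxi.1]) hlen.le),
      h1 1 le_rfl ▸ hφ ((div_le_one hlen).2 (by linarith [hxi.2]))⟩
  have hJ : 0 ≤ f (α (i + 1)) - f (α i) := by linarith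
  have hlow := mul_nonneg hJ hφt.1
  have hhigh := mul_le_of_le_one_right hJ hφt.2
  rw [stepInterpolant_eq_of_mem_Icc h0 h1 hα hi hxi, abs_le]
  constructor <;> linarith [hjump i hi]

end StepInterpolant

theorem intervalIntegral_abs_rpow_rpow_le {u : ℝ → ℝ} {a b p ε : ℝ} (hab : a ≤ b) (hp : 0 < p)
    (hu : ∀ x ∈ Icc a b, |u x| ≤ ε) :
    (∫ x in a..b, |u x| ^ p) ^ (1 / p) ≤ (b - a) ^ (1 / p) * ε := by
  have hε : 0 ≤ ε := (abs_nonneg _).trans (hu a ⟨le_rfl, hab⟩)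
  have hint : ∫ x in a..b, |u x| ^ p ≤ ε ^ p * (b - a) := by
    have h := intervalIntegral.norm_integral_le_of_norm_le_const (a := a) (b := b)
      (f := fun x => |u x| ^ p) (C := ε ^ p) fun x hx => by
        rw [uIoc_of_le hab] at hx
        rw [Real.norm_of_nonneg (by positivity)]
        exact Real.rpow_le_rpow (abs_nonneg _) (hu x (Ioc_subset_Icc_self hx)) hp.le
    rw [abs_of_nonneg (sub_nonneg.2 hab)] at h
    exact (le_abs_self _).trans h
  calc (∫ x in a..b, |u x| ^ p) ^ (1 / p)
      ≤ (ε ^ p * (b - a)) ^ (1 / p) :=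
        Real.rpow_le_rpow (intervalIntegral.integral_nonneg hab fun _ _ => by positivity) hint
          (by positivity)
    _ = (b - a) ^ (1 / p) * ε := by
        rw [Real.mul_rpow (by positivity) (sub_nonneg.2 hab), ← Real.rpow_mul hε,
          mul_one_div_cancel hp.ne', Real.rpow_one, mul_comm]

theorem stmt9_general (a b : ℝ) (hab : a < b) (p : ℝ) (hp : 1 ≤ p)
    (f : ℝ → ℝ) (hf_cont : ContinuousOn f (Set.Icc a b))
    (hf_mono : MonotoneOn f (Set.Icc a b))
    (l m : ℕ) (hm : 2 * l + 1 ≤ m)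
    (k : ℕ → ℕ) (hk : ∀ n, 1 ≤ k n) (α : ℕ → ℕ → ℝ)
    (hα0 : ∀ n, α n 0 = a) (hαk : ∀ n, α n (k n) = b)
    (hαinc : ∀ n, ∀ i < k n, α n i < α n (i + 1))
    (d : ℕ → ℝ) (hd : ∀ n, ∀ i < k n, α n (i + 1) - α n i ≤ d n)
    (hmesh : Tendsto d atTop (nhds 0))
    (SI : ℕ → ℝ → ℝ)
    (hSI_best : ∀ n, ∀ g ∈ SIcone a b (α n) (k n) m l,
      (∫ x in a..b, |f x - SI n x| ^ p) ^ (1 / p) ≤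
        (∫ x in a..b, |f x - g x| ^ p) ^ (1 / p)) :
    Tendsto (fun n => (∫ x in a..b, |f x - SI n x| ^ p) ^ (1 / p)) atTop (nhds 0) := by
  obtain ⟨φ, hφ⟩ := exists_isPolynomialStep l
  have hC : 0 < (b - a) ^ (1 / p) := Real.rpow_pos_of_pos (sub_pos.2 hab) _
  refine Metric.nhds_basis_closedBall.tendsto_right_iff.2 fun ε hε => ?_
  obtain ⟨δ, hδ, hfδ⟩ := Metric.uniformContinuousOn_iff_le.1
    (isCompact_Icc.uniformContinuousOn_of_continuous hf_cont) (ε / (b - a) ^ (1 / p))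
    (by positivity)
  filter_upwards [hmesh.eventually (gt_mem_nhds hδ)] with n hn
  have hmem : ∀ i ≤ k n, α n i ∈ Icc a b := fun i hi =>
    hα0 n ▸ hαk n ▸ mem_Icc_of_lt_succ (hαinc n) hi
  have hjump : ∀ i < k n, f (α n (i + 1)) - f (α n i) ≤ ε / (b - a) ^ (1 / p) := by
    intro i hi
    have hdist : dist (α n (i + 1)) (α n i) ≤ δ := by
      rw [Real.dist_eq, abs_of_pos (sub_pos.2 (hαinc n i hi))]
      linarith [hd n i hi]
    exact (le_abs_self _).trans (hfδ _ (hmem _ hi) _ (hmem _ hi.le) hdist)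
  have hg := stepInterpolant_mem_SIcone a b hφ hm (hαinc n)
    (y := fun i => f (α n i)) fun i hi => hf_mono (hmem _ hi.le) (hmem _ hi) (hαinc n i hi).le
  rw [Metric.mem_closedBall, dist_zero_right,
    Real.norm_of_nonneg (Real.rpow_nonneg (intervalIntegral.integral_nonneg hab.le
      fun _ _ => by positivity) _)]
  calc _ ≤ _ := hSI_best n _ hg
    _ ≤ (b - a) ^ (1 / p) * (ε / (b - a) ^ (1 / p)) :=
      intervalIntegral_abs_rpow_rpow_le hab.le (by linarith) fun x hx =>
        abs_sub_stepInterpolant_le hf_mono hφ.monotone hφ.eq_zero_of_nonpos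
          hφ.eq_one_of_one_le (hk n) (hα0 n) (hαk n) (hαinc n) hjump hx
    _ = ε := mul_div_cancel₀ _ hC.ne'

/-- If `f` is continuous and nondecreasing on `[a,b]`, `(Δₙ)` is a sequence of partitions with
mesh tending to `0`, `m ≥ 2l+1` and `p ∈ [1,∞)`, then the best `Lᵖ` approximations `SIₙ` of `f`
among nondecreasing `Δₙ`-piecewise polynomials of degree `≤ m` in `C^l[a,b]` converge to `f`
in the `Lᵖ` norm. -/
theorem stmt9 (a b : ℝ) (hab : a < b) (p : ℝ) (hp : 1 ≤ p)
    (f : ℝ → ℝ) (hf_cont : ContinuousOn f (Set.Icc a b))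
    (hf_mono : MonotoneOn f (Set.Icc a b))
    (l m : ℕ) (hm : 2 * l + 1 ≤ m)
    (k : ℕ → ℕ) (hk : ∀ n, 1 ≤ k n) (α : ℕ → ℕ → ℝ)
    (hα0 : ∀ n, α n 0 = a) (hαk : ∀ n, α n (k n) = b)
    (hαinc : ∀ n, ∀ i < k n, α n i < α n (i + 1))
    (d : ℕ → ℝ) (hd : ∀ n, ∀ i < k n, α n (i + 1) - α n i ≤ d n)
    (hmesh : Tendsto d atTop (nhds 0))
    (SI : ℕ → ℝ → ℝ)
    (hSI_mem : ∀ n, SI n ∈ SIcone a b (α n) (k n) m l)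
    (hSI_best : ∀ n, ∀ g ∈ SIcone a b (α n) (k n) m l,
      (∫ x in a..b, |f x - SI n x| ^ p) ^ (1 / p) ≤
        (∫ x in a..b, |f x - g x| ^ p) ^ (1 / p)) :
    Tendsto (fun n => (∫ x in a..b, |f x - SI n x| ^ p) ^ (1 / p)) atTop (nhds 0) :=
  stmt9_general a b hab p hp f hf_cont hf_mono l m hm k hk α hα0 hαk hαinc d hd hmesh SI hSI_best
end
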